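/- Let p(x) = Σ_{t=0}^{T} β̂_t·L_t(x) with T fixed and let M₁ be the (N−1)×(N−1) matrix with entries (M₁)_{jk} = ∫_{−1}^1 p(x)·φ'_k(x)·φ'_j(x) dx for 0 ≤ j,k ≤ N−2. Then the number of nonzero entries of M₁ is at most (2T+1)·(N−1), i.e., O(T·N). -/

import Mathlib

open Polynomial MeasureTheory intervalIntegral Finset

/-! Since `φ_j' = -(2j+3) L_{j+1}`, the entry `(M₁)_{jk}` is a multiple of
`∫ L_{j+1} · (p L_{k+1})`, and `p L_{k+1}` has degree at most `T + k + 1`. Orthogonality of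
`L_{j+1}` to all polynomials of lower degree kills the entry as soon as `j > k + T`, and by
symmetry as soon as `k > j + T`; so `M₁` lives on a band of width `2T + 1`. -/

/-- The `n`-th Legendre polynomial, defined by `L_0 = 1`, `L_1 = X`, and the
three-term recurrence `(n+1) L_{n+1} = (2n+1) X L_n - n L_{n-1}`. -/
noncomputable def legendre : ℕ → Polynomial ℝ
  | 0 => 1
  | 1 => Polynomial.X
  | (n+2) =>
      Polynomial.C ((2*(n:ℝ)+3)/((n:ℝ)+2)) * (Polynomial.X * legendre (n+1))
        - Polynomial.C (((n:ℝ)+1)/((n:ℝ)+2)) * legendre n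

/-- The Legendre–Galerkin Dirichlet basis function `φ_k = L_k - L_{k+2}`. -/
noncomputable def phi (k : ℕ) : Polynomial ℝ := legendre k - legendre (k+2)

theorem legendre_recurrence (n : ℕ) : C ((n:ℝ)+2) * legendre (n+2)
    = C (2*(n:ℝ)+3) * (X * legendre (n+1)) - C ((n:ℝ)+1) * legendre n := by
  have hn : ((n:ℝ)+2) ≠ 0 := by positivity
  rw [legendre, mul_sub, ← mul_assoc, ← mul_assoc, ← C_mul, ← mul_assoc, ← C_mul,
    mul_div_cancel₀ _ hn, mul_div_cancel₀ _ hn, mul_assoc]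

theorem natDegree_legendre_le : ∀ n, (legendre n).natDegree ≤ n
  | 0 => by simp [legendre]
  | 1 => by simp [legendre]
  | n + 2 => by
    have h₁ := natDegree_legendre_le (n + 1)
    have h₀ := natDegree_legendre_le n
    rw [legendre]
    refine (natDegree_sub_le _ _).trans (max_le ((natDegree_C_mul_le _ _).trans ?_)
      ((natDegree_C_mul_le _ _).trans (by omega)))
    exact natDegree_mul_le.trans (by rw [natDegree_X]; omega)

theorem legendre_eval_of_sq_eq_one {x : ℝ} (hx : x ^ 2 = 1) : ∀ n, (legendre n).eval x = x ^ n
  | 0 => by simp [legendre]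
  | 1 => by simp [legendre]
  | n + 2 => by
    rw [legendre]
    simp only [eval_sub, eval_mul, eval_C, eval_X, legendre_eval_of_sq_eq_one hx (n + 1),
      legendre_eval_of_sq_eq_one hx n]
    field_simp
    linear_combination ((n:ℝ) + 1) * x ^ n * hx

theorem phi_eval_of_sq_eq_one {x : ℝ} (hx : x ^ 2 = 1) (k : ℕ) : (phi k).eval x = 0 := by
  rw [phi, eval_sub, legendre_eval_of_sq_eq_one hx, legendre_eval_of_sq_eq_one hx, pow_add, hx,
    mul_one, sub_self]

theorem integral_eval_mul_derivative (p q : ℝ[X]) (a b : ℝ) :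
    ∫ x in a..b, p.eval x * (derivative q).eval x
      = p.eval b * q.eval b - p.eval a * q.eval a
        - ∫ x in a..b, (derivative p).eval x * q.eval x :=
  integral_mul_deriv_eq_deriv_mul (fun x _ => p.hasDerivAt x) (fun x _ => q.hasDerivAt x)
    ((derivative p).continuous.intervalIntegrable _ _)
    ((derivative q).continuous.intervalIntegrable _ _)

theorem derivative_legendre_succ (n : ℕ) :
    derivative (legendre (n + 1)) = X * derivative (legendre n) + C ((n:ℝ) + 1) * legendre n ∧
    X * derivative (legendre (n + 1))
      = C ((n:ℝ) + 1) * legendre (n + 1) + derivative (legendre n) := by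
  induction n with
  | zero => simp [legendre]
  | succ n ih =>
    obtain ⟨hA, hB⟩ := ih
    have hn : (C ((n:ℝ) + 2) : ℝ[X]) ≠ 0 := C_ne_zero.mpr (by positivity)
    have hrec := legendre_recurrence n
    have hrec' := congrArg derivative hrec
    simp only [derivative_mul, derivative_sub, derivative_C, derivative_X, zero_mul, zero_add,
      one_mul] at hrec'
    have hD : derivative (legendre (n + 2))
        = C (2 * (n:ℝ) + 3) * legendre (n + 1) + derivative (legendre n) := by
      apply mul_left_cancel₀ hn
      simp only [map_add, map_mul, map_natCast, map_ofNat, map_one] at hrec' hB ⊢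
      linear_combination hrec' + (2 * (n : ℝ[X]) + 3) * hB
    simp only [Nat.cast_add, Nat.cast_one, map_add, map_mul, map_natCast, map_ofNat, map_one,
      add_assoc, one_add_one_eq_two] at hA hB hD hrec ⊢
    constructor
    · linear_combination hD - hB
    · linear_combination X * hD - hA - hrec

theorem derivative_legendre_add_two (n : ℕ) :
    derivative (legendre (n + 2))
      = C (2 * (n:ℝ) + 3) * legendre (n + 1) + derivative (legendre n) := by
  obtain ⟨hA, -⟩ := derivative_legendre_succ (n + 1)
  obtain ⟨-, hB⟩ := derivative_legendre_succ n
  simp only [Nat.cast_add, Nat.cast_one, map_add, map_mul, map_natCast, map_ofNat, map_one]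
    at hA hB ⊢
  linear_combination hA + hB

theorem derivative_phi (k : ℕ) :
    derivative (phi k) = -C (2 * (k:ℝ) + 3) * legendre (k + 1) := by
  rw [phi, derivative_sub, derivative_legendre_add_two]
  ring

/-- Since `(2k+3) L_{k+1} = -φ_k'` and `φ_k(±1) = 0`, integrating by parts moves the derivative
onto `q`, lowering its degree; induction on the degree then concludes. -/
theorem integral_legendre_mul_eq_zero {m : ℕ} {q : ℝ[X]} (hq : q.natDegree < m) :
    ∫ x in (-1:ℝ)..1, (legendre m).eval x * q.eval x = 0 := by
  induction hd : q.natDegree using Nat.strong_induction_on generalizing q m with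
  | _ d ih =>
  obtain ⟨k, rfl⟩ : ∃ k, m = k + 1 := ⟨m - 1, by omega⟩
  have hparts : (2 * (k:ℝ) + 3) * ∫ x in (-1:ℝ)..1, (legendre (k + 1)).eval x * q.eval x
      = ∫ x in (-1:ℝ)..1, (phi k).eval x * (derivative q).eval x := by
    rw [integral_eval_mul_derivative, phi_eval_of_sq_eq_one (by norm_num),
      phi_eval_of_sq_eq_one (by norm_num), zero_mul, zero_mul, sub_zero, zero_sub,
      ← intervalIntegral.integral_const_mul, ← intervalIntegral.integral_neg]
    congr 1; ext x
    simp only [derivative_phi, eval_mul, eval_neg, eval_C]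
    ring
  have hq' : ∫ x in (-1:ℝ)..1, (phi k).eval x * (derivative q).eval x = 0 := by
    rcases eq_or_ne d 0 with rfl | hd0
    · simp [derivative_of_natDegree_zero hd]
    have hlt := natDegree_derivative_lt (hd ▸ hd0)
    simp only [phi, eval_sub, sub_mul]
    rw [intervalIntegral.integral_sub ((by fun_prop : Continuous _).intervalIntegrable _ _)
      ((by fun_prop : Continuous _).intervalIntegrable _ _), ih _ (hd ▸ hlt) (by omega) rfl,
      ih _ (hd ▸ hlt) (by omega) rfl, sub_zero]
  have hk : (2 * (k:ℝ) + 3) ≠ 0 := by positivity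
  exact (mul_eq_zero.mp (hparts.trans hq')).resolve_left hk

theorem integral_mul_derivative_phi_mul_derivative_phi_eq_zero {p : ℝ[X]} {j k : ℕ}
    (h : p.natDegree + k < j) :
    ∫ x in (-1:ℝ)..1,
      p.eval x * (derivative (phi k)).eval x * (derivative (phi j)).eval x = 0 := by
  have hdeg : (p * legendre (k + 1)).natDegree < j + 1 :=
    natDegree_mul_le.trans_lt (by have := natDegree_legendre_le (k + 1); omega)
  calc _ = ∫ x in (-1:ℝ)..1, ((2 * (k:ℝ) + 3) * (2 * (j:ℝ) + 3)) *
        ((legendre (j + 1)).eval x * (p * legendre (k + 1)).eval x) := by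
        congr 1; ext x; simp only [derivative_phi, eval_mul, eval_neg, eval_C]; ring
    _ = 0 := by
        rw [intervalIntegral.integral_const_mul, integral_legendre_mul_eq_zero hdeg, mul_zero]

theorem ncard_band_le (n T : ℕ) :
    {ij : Fin n × Fin n | (ij.1:ℕ) ≤ ij.2 + T ∧ (ij.2:ℕ) ≤ ij.1 + T}.ncard
      ≤ (2 * T + 1) * n := by
  calc _ ≤ (↑(range n ×ˢ range (2 * T + 1)) : Set (ℕ × ℕ)).ncard := by
        refine Set.ncard_le_ncard_of_injOn (fun ij => ((ij.1:ℕ), ij.2 + T - ij.1)) ?_ ?_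
        · rintro ⟨i, j⟩ ⟨-, hji⟩
          simp only [coe_product, coe_range, Set.mem_prod, Set.mem_Iio] at hji ⊢
          omega
        · rintro ⟨i, j⟩ ⟨hij, -⟩ ⟨i', j'⟩ ⟨hij', -⟩ he
          simp only [Prod.mk.injEq] at hij hij' he
          simp only [Prod.mk.injEq, Fin.ext_iff]
          omega
    _ = (2 * T + 1) * n := by rw [Set.ncard_coe_finset, card_product, card_range, card_range,
          mul_comm]

theorem stiffness_nnz_bound (T N : ℕ) (betaHat : ℕ → ℝ)
    (M₁ : Matrix (Fin (N-1)) (Fin (N-1)) ℝ)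
    (hM : ∀ j k : Fin (N-1), M₁ j k =
      ∫ x in (-1:ℝ)..1,
        (∑ t ∈ Finset.range (T+1), betaHat t * (legendre t).eval x) *
          ((phi (k:ℕ)).derivative).eval x * ((phi (j:ℕ)).derivative).eval x) :
    {jk : Fin (N-1) × Fin (N-1) | M₁ jk.1 jk.2 ≠ 0}.ncard ≤ (2*T+1) * (N-1) := by
  set p : ℝ[X] := ∑ t ∈ range (T + 1), C (betaHat t) * legendre t
  have hp : p.natDegree ≤ T := natDegree_sum_le_of_forall_le _ _ fun t ht =>
    (natDegree_C_mul_le _ _).trans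
      ((natDegree_legendre_le t).trans (Nat.lt_succ_iff.mp (mem_range.mp ht)))
  have hM' : ∀ j k, M₁ j k = ∫ x in (-1:ℝ)..1,
      p.eval x * (derivative (phi k)).eval x * (derivative (phi j)).eval x := by
    simp only [hM, p, eval_finsetSum, eval_mul, eval_C, implies_true]
  have hband : ∀ j k : Fin (N-1), M₁ j k ≠ 0 → (j:ℕ) ≤ k + T ∧ (k:ℕ) ≤ j + T := by
    intro j k hjk
    rw [hM'] at hjk
    constructor <;> by_contra! h <;> apply hjk
    · exact integral_mul_derivative_phi_mul_derivative_phi_eq_zero (by omega)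
    · simpa only [mul_right_comm] using
        integral_mul_derivative_phi_mul_derivative_phi_eq_zero (p := p) (j := k) (k := j) (by omega)
  exact (Set.ncard_le_ncard fun jk h => hband jk.1 jk.2 h).trans (ncard_band_le _ _)
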